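/- arXiv:2411.09142 — 2 statements merged into one kernel-verified Lean document; each statement's English description precedes it below -/
import Mathlib

section
/- Fix ε ≥ 0 and δ ∈ [0,1]. Suppose probability measures P and Q on Ω satisfy (ε, δ)-differential privacy in both directions, i.e. δ_{P|Q}(ε) ≤ δ and δ_{Q|P}(ε) ≤ δ. Then for every t ∈ ℝ, both δ_{P|Q}(t) and δ_{Q|P}(t) are bounded above by δ_RR(t), the privacy profile of the randomized response mechanism M_RR^{ε,δ}, namely: δ if t > ε; 1 − (1−δ)(e^t + 1)/(e^ε + 1) if −ε < t ≤ ε; and 1 − e^t(1−δ) if t ≤ −ε. -/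
/-!
Fix a measurable set `S` and write `p = P S`, `q = Q S`. Applying the `(ε, δ)` guarantee to `S`
under `(P, Q)` and to `Sᶜ` under `(Q, P)` gives the two linear constraints
`p - e^ε q ≤ δ` and `(1 - q) - e^ε (1 - p) ≤ δ`, which are exactly the constraints met with
equality by randomized response. Maximizing `p - e^t q` under them gives `δ_RR(t)`: for `t > ε`
the first constraint suffices, for `t ≤ -ε` the second one, and in between the bound is the
combination of the two with weights `e^{t+ε} - 1` and `e^ε - e^t`.
-/

open MeasureTheory

/-- The privacy profile `δ_{P|Q}(ε) := sup { P(S) − e^ε · Q(S) : S measurable }`. -/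
noncomputable def privProfile {Ω : Type*} [MeasurableSpace Ω]
    (P Q : Measure Ω) (ε : ℝ) : ℝ :=
  ⨆ S : {S : Set Ω // MeasurableSet S}, ((P S.1).toReal - Real.exp ε * (Q S.1).toReal)

section PrivacyProfile

variable {Ω : Type*} [MeasurableSpace Ω] {P Q : Measure Ω} {t c : ℝ}

lemma le_privProfile [IsFiniteMeasure P] {S : Set Ω} (hS : MeasurableSet S) :
    P.real S - Real.exp t * Q.real S ≤ privProfile P Q t := by
  refine le_ciSup (f := fun S : {S : Set Ω // MeasurableSet S} =>
    P.real S.1 - Real.exp t * Q.real S.1) ⟨P.real Set.univ, ?_⟩ ⟨S, hS⟩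
  rintro _ ⟨T, rfl⟩
  have hQ : 0 ≤ Real.exp t * Q.real T.1 := by positivity
  linarith [measureReal_mono (μ := P) (Set.subset_univ T.1)]

lemma privProfile_le (h : ∀ S, MeasurableSet S → P.real S - Real.exp t * Q.real S ≤ c) :
    privProfile P Q t ≤ c :=
  have : Nonempty {S : Set Ω // MeasurableSet S} := ⟨⟨∅, MeasurableSet.empty⟩⟩
  ciSup_le fun S => h S.1 S.2

end PrivacyProfile

/-- The privacy profile `δ_RR(t)` of the randomized response mechanism `M_RR^{ε,δ}`. -/
noncomputable def rrProfile (ε δ t : ℝ) : ℝ :=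
  if ε < t then δ
  else if -ε < t then 1 - (1 - δ) * (Real.exp t + 1) / (Real.exp ε + 1)
  else 1 - Real.exp t * (1 - δ)

section TwoPoint

variable {ε δ t p q : ℝ}

lemma sub_exp_mul_le_of_lt (hεt : ε < t) (hq : 0 ≤ q) (hA : p - Real.exp ε * q ≤ δ) :
    p - Real.exp t * q ≤ δ := by
  have : Real.exp ε * q ≤ Real.exp t * q :=
    mul_le_mul_of_nonneg_right (Real.exp_le_exp.2 hεt.le) hq
  linarith

lemma sub_exp_mul_le_of_le_neg (htε : t ≤ -ε) (hp : p ≤ 1)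
    (hB : (1 - q) - Real.exp ε * (1 - p) ≤ δ) :
    p - Real.exp t * q ≤ 1 - Real.exp t * (1 - δ) := by
  have hsum : Real.exp t * Real.exp ε ≤ 1 := by
    rw [← Real.exp_add]
    exact Real.exp_le_one_iff.2 (by linarith)
  nlinarith [mul_le_mul_of_nonneg_left hB (Real.exp_pos t).le,
    mul_le_mul_of_nonneg_right hsum (sub_nonneg.2 hp)]

lemma sub_exp_mul_le_of_mem_Ioc (ht : t ∈ Set.Ioc (-ε) ε)
    (hA : p - Real.exp ε * q ≤ δ) (hB : (1 - q) - Real.exp ε * (1 - p) ≤ δ) :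
    p - Real.exp t * q ≤ 1 - (1 - δ) * (Real.exp t + 1) / (Real.exp ε + 1) := by
  obtain ⟨hlt, hle⟩ := ht
  set E := Real.exp ε
  set T := Real.exp t
  have hE : 1 < E := Real.one_lt_exp_iff.2 (by linarith)
  have hTE : 1 < T * E := by
    rw [← Real.exp_add]
    exact Real.one_lt_exp_iff.2 (by linarith)
  have hTleE : T ≤ E := Real.exp_le_exp.2 hle
  have hgap : 1 - (1 - δ) * (T + 1) / (E + 1) - (p - T * q)
      = ((T * E - 1) * (δ - (p - E * q)) + (E - T) * (δ - ((1 - q) - E * (1 - p))))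
        / ((E - 1) * (E + 1)) := by
    field_simp [(by linarith : E - 1 ≠ 0)]
    ring
  have : 0 ≤ 1 - (1 - δ) * (T + 1) / (E + 1) - (p - T * q) := by
    rw [hgap]
    apply div_nonneg
    · exact add_nonneg (mul_nonneg (by linarith) (by linarith))
        (mul_nonneg (by linarith) (by linarith))
    · exact mul_nonneg (by linarith) (by linarith)
  linarith

lemma sub_exp_mul_le_rrProfile (hq : 0 ≤ q) (hp : p ≤ 1)
    (hA : p - Real.exp ε * q ≤ δ) (hB : (1 - q) - Real.exp ε * (1 - p) ≤ δ) :
    p - Real.exp t * q ≤ rrProfile ε δ t := by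
  unfold rrProfile
  split_ifs with hεt htε
  · exact sub_exp_mul_le_of_lt hεt hq hA
  · exact sub_exp_mul_le_of_mem_Ioc ⟨htε, not_lt.1 hεt⟩ hA hB
  · exact sub_exp_mul_le_of_le_neg (not_lt.1 htε) hp hB

end TwoPoint

lemma privProfile_le_rrProfile {Ω : Type*} [MeasurableSpace Ω]
    {P Q : Measure Ω} [IsProbabilityMeasure P] [IsProbabilityMeasure Q] {ε δ : ℝ}
    (hPQ : privProfile P Q ε ≤ δ) (hQP : privProfile Q P ε ≤ δ) (t : ℝ) :
    privProfile P Q t ≤ rrProfile ε δ t := by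
  refine privProfile_le fun S hS => sub_exp_mul_le_rrProfile measureReal_nonneg
    measureReal_le_one ((le_privProfile hS).trans hPQ) ?_
  rw [← probReal_compl_eq_one_sub hS, ← probReal_compl_eq_one_sub hS]
  exact (le_privProfile hS.compl).trans hQP

theorem rr_dominates_approx_dp_general {Ω : Type*} [MeasurableSpace Ω]
    (P Q : Measure Ω) [IsProbabilityMeasure P] [IsProbabilityMeasure Q]
    (ε δ : ℝ)
    (hPQ : privProfile P Q ε ≤ δ) (hQP : privProfile Q P ε ≤ δ) (t : ℝ) :
    privProfile P Q t ≤
      (if ε < t then δ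
       else if -ε < t then 1 - (1 - δ) * (Real.exp t + 1) / (Real.exp ε + 1)
       else 1 - Real.exp t * (1 - δ)) ∧
    privProfile Q P t ≤
      (if ε < t then δ
       else if -ε < t then 1 - (1 - δ) * (Real.exp t + 1) / (Real.exp ε + 1)
       else 1 - Real.exp t * (1 - δ)) :=
  ⟨privProfile_le_rrProfile hPQ hQP t, privProfile_le_rrProfile hQP hPQ t⟩

theorem rr_dominates_approx_dp {Ω : Type*} [MeasurableSpace Ω]
    (P Q : Measure Ω) [IsProbabilityMeasure P] [IsProbabilityMeasure Q]
    (ε δ : ℝ) (hε : 0 ≤ ε) (hδ : δ ∈ Set.Icc (0 : ℝ) 1)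
    (hPQ : privProfile P Q ε ≤ δ) (hQP : privProfile Q P ε ≤ δ) (t : ℝ) :
    privProfile P Q t ≤
      (if ε < t then δ
       else if -ε < t then 1 - (1 - δ) * (Real.exp t + 1) / (Real.exp ε + 1)
       else 1 - Real.exp t * (1 - δ)) ∧
    privProfile Q P t ≤
      (if ε < t then δ
       else if -ε < t then 1 - (1 - δ) * (Real.exp t + 1) / (Real.exp ε + 1)
       else 1 - Real.exp t * (1 - δ)) :=
  rr_dominates_approx_dp_general P Q ε δ hPQ hQP t
end

section
/- Fix ε ≥ 0. If probability measures P and Q satisfy pure ε-differential privacy in both directions, i.e. δ_{P|Q}(ε) = 0 and δ_{Q|P}(ε) = 0, then for every real q > 1, R_q(P‖Q) ≤ (1/(q−1)) · log( (e^ε/(e^ε+1)) · e^{−qε} + (1/(e^ε+1)) · e^{qε} ); equivalently, E_q(P‖Q) ≤ (e^{(1−q)ε} + e^{qε})/(e^ε + 1). -/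
/-!
Pure `ε`-DP in both directions pins the likelihood ratio `t = p / q` to `[e^{-ε}, e^ε]`
almost everywhere. On that interval the convex function `t ↦ t ^ r` lies below its chord, so
`p ^ r q ^ (1 - r) = q · t ^ r` is dominated by an affine combination of `p` and `q`, whose
integral is the chord evaluated at `t = 1`. That value is exactly the claimed bound, and it
is at least `1 = 1 ^ r` by the same chord inequality, which takes care of the logarithm.
-/

open MeasureTheory

open Real Set

theorem ConvexOn.le_add_slope_mul {s : Set ℝ} {φ : ℝ → ℝ} (hφ : ConvexOn ℝ s φ) {a b t : ℝ}
    (ha : a ∈ s) (hb : b ∈ s) (hat : a ≤ t) (htb : t ≤ b) :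
    φ t ≤ φ a + slope φ a b * (t - a) := by
  rcases hat.eq_or_lt with rfl | hat
  · simp
  have ht : t ∈ s := hφ.1.ordConnected.out ha hb ⟨hat.le, htb⟩
  have hsec := hφ.secant_mono ha ht hb hat.ne' (hat.trans_le htb).ne' htb
  rw [div_le_iff₀ (sub_pos.2 hat), ← slope_def_field] at hsec
  linarith

/-- The chord bound in homogeneous form, for the ratio `x / y ∈ [a, b]`. -/
theorem rpow_mul_rpow_one_sub_le {a b x y r : ℝ} (ha : 0 ≤ a) (hr : 1 ≤ r) (hy : 0 ≤ y)
    (hax : a * y ≤ x) (hxb : x ≤ b * y) :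
    x ^ r * y ^ (1 - r) ≤ a ^ r * y + slope (· ^ r) a b * (x - a * y) := by
  rcases hy.eq_or_lt with rfl | hy
  · obtain rfl : x = 0 := by linarith
    simp [zero_rpow (by linarith : r ≠ 0)]
  have hx : 0 ≤ x := (mul_nonneg ha hy.le).trans hax
  have hab : a ≤ b := le_of_mul_le_mul_right (hax.trans hxb) hy
  have hchord := (convexOn_rpow hr).le_add_slope_mul (mem_Ici.2 ha) (mem_Ici.2 (ha.trans hab))
    ((le_div_iff₀ hy).2 hax) ((div_le_iff₀ hy).2 hxb)
  calc x ^ r * y ^ (1 - r) = (x / y) ^ r * y := by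
        rw [div_rpow hx hy.le, rpow_sub hy, rpow_one]; ring
    _ ≤ (a ^ r + slope (· ^ r) a b * (x / y - a)) * y := by gcongr
    _ = a ^ r * y + slope (· ^ r) a b * (x - a * y) := by field_simp

section Density

variable {Ω : Type*} [MeasurableSpace Ω] {μ : Measure Ω}

theorem le_smul_of_privProfile_nonpos {P Q : Measure Ω} [IsFiniteMeasure P]
    [IsFiniteMeasure Q] {ε : ℝ} (h : privProfile P Q ε ≤ 0) :
    P ≤ ENNReal.ofReal (exp ε) • Q := by
  refine Measure.le_iff.2 fun S hS ↦ ?_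
  have hbdd : BddAbove (range fun S : {S : Set Ω // MeasurableSet S} ↦
      (P S.1).toReal - exp ε * (Q S.1).toReal) := by
    refine ⟨P.real univ, ?_⟩
    rintro _ ⟨T, rfl⟩
    change P.real T.1 - exp ε * Q.real T.1 ≤ P.real univ
    have hQT : 0 ≤ exp ε * Q.real T.1 := by positivity
    linarith [measureReal_mono (μ := P) (subset_univ T.1)]
  have hS' : P.real S ≤ exp ε * Q.real S := by
    have hsup : P.real S - exp ε * Q.real S ≤ 0 := (le_ciSup hbdd ⟨S, hS⟩).trans h
    linarith
  rw [Measure.smul_apply, smul_eq_mul, ← ofReal_measureReal, ← ofReal_measureReal,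
    ← ENNReal.ofReal_mul (exp_pos ε).le]
  exact ENNReal.ofReal_le_ofReal hS'

theorem integral_rpow_mul_rpow_one_sub_le {f g : Ω → ℝ} (hf : Integrable f μ)
    (hg : Integrable g μ) (hf1 : ∫ x, f x ∂μ = 1) (hg1 : ∫ x, g x ∂μ = 1) (hg0 : 0 ≤ g)
    {a b r : ℝ} (ha : 0 ≤ a) (hr : 1 ≤ r) (hlo : ∀ᵐ x ∂μ, a * g x ≤ f x)
    (hhi : ∀ᵐ x ∂μ, f x ≤ b * g x) :
    ∫ x, f x ^ r * g x ^ (1 - r) ∂μ ≤ a ^ r + slope (· ^ r) a b * (1 - a) := by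
  have hnonneg : 0 ≤ᵐ[μ] fun x ↦ f x ^ r * g x ^ (1 - r) := by
    filter_upwards [hlo] with x hx
    exact mul_nonneg (rpow_nonneg ((mul_nonneg ha (hg0 x)).trans hx) r) (rpow_nonneg (hg0 x) _)
  have hdiff : Integrable (fun x ↦ f x - a * g x) μ := hf.sub (hg.const_mul a)
  calc ∫ x, f x ^ r * g x ^ (1 - r) ∂μ
      ≤ ∫ x, (a ^ r * g x + slope (· ^ r) a b * (f x - a * g x)) ∂μ := by
        refine integral_mono_of_nonneg hnonneg
          ((hg.const_mul _).add (hdiff.const_mul _)) ?_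
        filter_upwards [hlo, hhi] with x hxlo hxhi
        exact rpow_mul_rpow_one_sub_le ha hr (hg0 x) hxlo hxhi
    _ = a ^ r + slope (· ^ r) a b * (1 - a) := by
        rw [integral_add (hg.const_mul _) (hdiff.const_mul _),
          integral_const_mul, integral_const_mul, integral_sub hf (hg.const_mul a),
          integral_const_mul, hf1, hg1, mul_one, mul_one]

theorem integrable_of_isFiniteMeasure_withDensity_ofReal {f : Ω → ℝ}
    (hf : AEStronglyMeasurable f μ) (hf0 : 0 ≤ᵐ[μ] f)
    [IsFiniteMeasure (μ.withDensity fun x ↦ ENNReal.ofReal (f x))] : Integrable f μ := by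
  rw [← lintegral_ofReal_ne_top_iff_integrable hf hf0, ← setLIntegral_univ,
    ← withDensity_apply _ .univ]
  exact measure_ne_top _ _

theorem integral_eq_one_of_isProbabilityMeasure_withDensity_ofReal {f : Ω → ℝ}
    (hf : AEStronglyMeasurable f μ) (hf0 : 0 ≤ᵐ[μ] f)
    [IsProbabilityMeasure (μ.withDensity fun x ↦ ENNReal.ofReal (f x))] :
    ∫ x, f x ∂μ = 1 := by
  rw [← ENNReal.ofReal_eq_one, ofReal_integral_eq_lintegral_ofReal
    (integrable_of_isFiniteMeasure_withDensity_ofReal hf hf0) hf0, ← setLIntegral_univ,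
    ← withDensity_apply _ .univ]
  exact measure_univ

theorem ae_le_of_withDensity_le_withDensity [SigmaFinite μ] {F G : Ω → ENNReal}
    (hF : Measurable F) (h : μ.withDensity F ≤ μ.withDensity G) : F ≤ᵐ[μ] G :=
  ae_le_of_forall_setLIntegral_le_of_sigmaFinite hF fun s hs _ ↦ by
    simpa only [withDensity_apply _ hs] using h s

theorem ae_le_exp_mul_of_privProfile_nonpos [SigmaFinite μ] {f g : Ω → ℝ} (hf : Measurable f)
    (hg : Measurable g) (hg0 : 0 ≤ g)
    [IsFiniteMeasure (μ.withDensity fun x ↦ ENNReal.ofReal (f x))]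
    [IsFiniteMeasure (μ.withDensity fun x ↦ ENNReal.ofReal (g x))] {ε : ℝ}
    (h : privProfile (μ.withDensity fun x ↦ ENNReal.ofReal (f x))
      (μ.withDensity fun x ↦ ENNReal.ofReal (g x)) ε ≤ 0) :
    ∀ᵐ x ∂μ, f x ≤ exp ε * g x := by
  have hle := (le_smul_of_privProfile_nonpos h).trans_eq
    (withDensity_smul _ hg.ennreal_ofReal).symm
  filter_upwards [ae_le_of_withDensity_le_withDensity hf.ennreal_ofReal hle] with x hx
  rwa [Pi.smul_apply, smul_eq_mul, ← ENNReal.ofReal_mul (exp_pos ε).le,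
    ENNReal.ofReal_le_ofReal_iff (mul_nonneg (exp_pos ε).le (hg0 x))] at hx

end Density

theorem exp_neg_rpow_add_slope_mul_one_sub_exp_neg (ε r : ℝ) :
    exp (-ε) ^ r + slope (· ^ r) (exp (-ε)) (exp ε) * (1 - exp (-ε))
      = exp ε / (exp ε + 1) * exp (-r * ε) + 1 / (exp ε + 1) * exp (r * ε) := by
  have hslope := sub_smul_slope (· ^ r) (exp (-ε)) (exp ε)
  have hinv : exp (-ε) * exp ε = 1 := by rw [← exp_add, neg_add_cancel, exp_zero]
  simp only [smul_eq_mul, vsub_eq_sub] at hslope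
  rw [← exp_mul, ← exp_mul, neg_mul] at hslope
  rw [← exp_mul, neg_mul, neg_mul, mul_comm r ε]
  field_simp
  linear_combination hslope - slope (· ^ r) (exp (-ε)) (exp ε) * hinv

theorem pure_dp_renyi_bound {Ω : Type*} [MeasurableSpace Ω]
    (μ : Measure Ω) [SigmaFinite μ]
    (P Q : Measure Ω) [IsProbabilityMeasure P] [IsProbabilityMeasure Q]
    (f g : Ω → ℝ) (hf : Measurable f) (hg : Measurable g)
    (hf0 : 0 ≤ f) (hg0 : 0 ≤ g)
    (hP : P = μ.withDensity (fun θ => ENNReal.ofReal (f θ)))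
    (hQ : Q = μ.withDensity (fun θ => ENNReal.ofReal (g θ)))
    (ε : ℝ) (hε : 0 ≤ ε)
    (hPQ : privProfile P Q ε = 0) (hQP : privProfile Q P ε = 0)
    (r : ℝ) (hr : 1 < r) :
    (1 / (r - 1)) * Real.log (∫ θ, f θ ^ r * g θ ^ (1 - r) ∂μ)
      ≤ (1 / (r - 1)) * Real.log ((Real.exp ε / (Real.exp ε + 1)) * Real.exp (-r * ε)
          + (1 / (Real.exp ε + 1)) * Real.exp (r * ε)) := by
  subst hP hQ
  have hupper := ae_le_exp_mul_of_privProfile_nonpos hf hg hg0 hPQ.le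
  have hlower : ∀ᵐ θ ∂μ, exp (-ε) * g θ ≤ f θ := by
    filter_upwards [ae_le_exp_mul_of_privProfile_nonpos hg hf hf0 hQP.le] with θ hθ
    rwa [exp_neg, inv_mul_le_iff₀ (exp_pos ε)]
  have hI := integral_rpow_mul_rpow_one_sub_le
    (integrable_of_isFiniteMeasure_withDensity_ofReal hf.aestronglyMeasurable (.of_forall hf0))
    (integrable_of_isFiniteMeasure_withDensity_ofReal hg.aestronglyMeasurable (.of_forall hg0))
    (integral_eq_one_of_isProbabilityMeasure_withDensity_ofReal hf.aestronglyMeasurable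
      (.of_forall hf0))
    (integral_eq_one_of_isProbabilityMeasure_withDensity_ofReal hg.aestronglyMeasurable
      (.of_forall hg0))
    hg0 (exp_pos _).le hr.le hlower hupper
  have hone := (convexOn_rpow hr.le).le_add_slope_mul (mem_Ici.2 (exp_pos (-ε)).le)
    (mem_Ici.2 (exp_pos ε).le) (exp_le_one_iff.2 (neg_nonpos.2 hε)) (one_le_exp hε)
  rw [one_rpow] at hone
  rw [exp_neg_rpow_add_slope_mul_one_sub_exp_neg] at hI hone
  refine mul_le_mul_of_nonneg_left ?_ (one_div_nonneg.2 (sub_nonneg.2 hr.le))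
  have hI0 : 0 ≤ ∫ θ, f θ ^ r * g θ ^ (1 - r) ∂μ :=
    integral_nonneg fun θ ↦ mul_nonneg (rpow_nonneg (hf0 θ) r) (rpow_nonneg (hg0 θ) _)
  rcases hI0.eq_or_lt with hzero | hpos
  · rw [← hzero, log_zero]
    exact log_nonneg hone
  · exact log_le_log hpos hI
end
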